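/- Let A be a cocommutative Hopf algebra over a field K, X, Y ⊆ A normal Hopf subalgebras, and [X,Y] the subalgebra generated by the elements {x,y} = x₁ y₁ S(x₂) S(y₂). Then [X,Y] is normal in A: for every c ∈ A, x ∈ X, y ∈ Y, the element c₁ x₁ y₁ S(x₂) S(y₂) S(c₂) lies in [X,Y]. -/

import Mathlib

open TensorProduct Coalgebra

/-- A coalgebra is cocommutative if the comultiplication is invariant under the
switch map. -/
def IsCocomm (K A : Type*) [CommSemiring K] [AddCommMonoid A] [Module K A]
    [Coalgebra K A] : Prop :=
  (TensorProduct.comm K A A).toLinearMap ∘ₗ (Coalgebra.comul (R := K) (A := A)) =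
    Coalgebra.comul

/-- The linear map sending `a ⊗ b` to the Sweedler sum `a₁ * b * S(a₂)`
(the adjoint action of a Hopf algebra on itself). -/
noncomputable def adAct (K A : Type*) [CommSemiring K] [Semiring A] [HopfAlgebra K A] :
    A ⊗[K] A →ₗ[K] A :=
  (LinearMap.mul' K A) ∘ₗ
    (LinearMap.lTensor A ((LinearMap.mul' K A) ∘ₗ
      (TensorProduct.comm K A A).toLinearMap ∘ₗ
      (LinearMap.rTensor A (HopfAlgebra.antipode (R := K) (A := A))))) ∘ₗ
    (TensorProduct.assoc K A A A).toLinearMap ∘ₗ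
    (LinearMap.rTensor A (Coalgebra.comul (R := K) (A := A)))

/-- The linear map sending `x ⊗ y` to the Sweedler sum
`x₁ * y₁ * S(x₂) * S(y₂)` (the "Hopf commutator" `{x, y}`). -/
noncomputable def hopfComm (K A : Type*) [CommSemiring K] [Semiring A] [HopfAlgebra K A] :
    A ⊗[K] A →ₗ[K] A :=
  (LinearMap.mul' K A) ∘ₗ
    (TensorProduct.map (LinearMap.mul' K A)
      ((LinearMap.mul' K A) ∘ₗ
        TensorProduct.map (HopfAlgebra.antipode (R := K) (A := A))
          (HopfAlgebra.antipode (R := K) (A := A)))) ∘ₗ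
    (TensorProduct.tensorTensorTensorComm K A A A A).toLinearMap ∘ₗ
    (TensorProduct.map (Coalgebra.comul (R := K)) (Coalgebra.comul (R := K)))

/-- The commutator subalgebra `[X,Y]`: the subalgebra of `A` generated by the
Hopf commutators `{x,y} = x₁ y₁ S(x₂) S(y₂)` for `x ∈ X`, `y ∈ Y`. -/
noncomputable def hopfCommutator {K A : Type*} [Field K] [Ring A] [HopfAlgebra K A]
    (X Y : Subalgebra K A) : Subalgebra K A :=
  Algebra.adjoin K {z : A | ∃ x ∈ X, ∃ y ∈ Y, z = hopfComm K A (x ⊗ₜ[K] y)}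

/-!
For fixed `u`, the map `c ↦ c₁ u S(c₂)` is the element `ad u = (· * u) * S` of the convolution
algebra `End(A)`, and `u ↦ ad u` is an algebra map. When `A` is cocommutative, `S` is an involution
and `Δ : A → A ⊗ A` is a coalgebra map; from this one gets `S ∘ ad u = ad (S u)` and
`Δ ∘ ad u = ∑ (ad u₁ ⊗ ad u₂) ∘ Δ`. Writing `{x, y} = μ((x₁ ⊗ S x₂)(y₁ ⊗ S y₂))`, these give
`c ▷ {x, y} = ∑ {c₁ ▷ x, c₂ ▷ y}` for `c ▷ u = c₁ u S(c₂)`, a sum of generators of `[X, Y]` when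
`X` and `Y` are normal.
-/

open WithConv

namespace Coalgebra.Repr

variable {R C B ι : Type*} [CommSemiring R] [AddCommMonoid C] [Module R C] [Coalgebra R C]
  [Coalgebra.IsCocomm R C] [Semiring B] [Algebra R B]

lemma convMul_apply_swap {c : C} (𝓡 : Repr R c ι) (f g : WithConv (C →ₗ[R] B)) :
    (f * g) c = ∑ i ∈ 𝓡.index, f (𝓡.right i) * g (𝓡.left i) := by
  rw [LinearMap.convMul_apply, ← comm_comul R c, ← 𝓡.eq]
  simp

end Coalgebra.Repr

namespace LinearMap

variable {R C B B₁ B₂ : Type*} [CommSemiring R] [AddCommMonoid C] [Module R C] [Coalgebra R C]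
  [Semiring B] [Algebra R B] [Semiring B₁] [Algebra R B₁] [Semiring B₂] [Algebra R B₂]

lemma mulRight_comp_convMul (v : B) (f g : WithConv (C →ₗ[R] B)) :
    toConv (mulRight R v ∘ₗ (f * g).ofConv) = f * toConv (mulRight R v ∘ₗ g.ofConv) := by
  ext c
  simp [(ℛ R c).convMul_apply, mul_assoc]

lemma toConv_algHom_comp_convOne (φ : B →ₐ[R] B₁) :
    toConv (φ.toLinearMap ∘ₗ (1 : WithConv (C →ₗ[R] B)).ofConv) = 1 := by
  ext; simp

lemma map_comp_comul_eq_convMul (f : C →ₗ[R] B₁) (g : C →ₗ[R] B₂) :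
    toConv (map f g ∘ₗ comul) =
      toConv (Algebra.TensorProduct.includeLeft.toLinearMap ∘ₗ f) *
        toConv (Algebra.TensorProduct.includeRight.toLinearMap ∘ₗ g) := by
  ext c
  simp [(ℛ R c).convMul_apply, ← (ℛ R c).eq]

lemma map_convOne_convOne_comp_comul :
    toConv (map (1 : WithConv (C →ₗ[R] B₁)).ofConv (1 : WithConv (C →ₗ[R] B₂)).ofConv ∘ₗ
      comul) = 1 := by
  rw [map_comp_comul_eq_convMul, toConv_algHom_comp_convOne, toConv_algHom_comp_convOne, one_mul]

/-- `Δ : C → C ⊗ C` is a coalgebra map since `C` is cocommutative, and precomposing with a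
coalgebra map preserves convolution. -/
lemma map_comp_comul_convMul_map_comp_comul [Coalgebra.IsCocomm R C]
    (f₁ f₂ : WithConv (C →ₗ[R] B₁)) (g₁ g₂ : WithConv (C →ₗ[R] B₂)) :
    toConv (map f₁.ofConv g₁.ofConv ∘ₗ comul) * toConv (map f₂.ofConv g₂.ofConv ∘ₗ comul) =
      toConv (map (f₁ * f₂).ofConv (g₁ * g₂).ofConv ∘ₗ comul) := by
  have h := convMul_comp_coalgHom_distrib (toConv (map f₁.ofConv g₁.ofConv))
    (toConv (map f₂.ofConv g₂.ofConv)) (comulCoalgHom R C)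
  rw [TensorProduct.map_convMul_map] at h
  exact congr(toConv $h).symm

end LinearMap

lemma Bialgebra.comul_comp_mulRight {K A ι : Type*} [CommSemiring K] [Semiring A]
    [Bialgebra K A] {u : A} (𝓡 : Coalgebra.Repr K u ι) :
    comul ∘ₗ LinearMap.mulRight K u =
      ∑ i ∈ 𝓡.index, map (LinearMap.mulRight K (𝓡.left i)) (LinearMap.mulRight K (𝓡.right i)) ∘ₗ
        comul := by
  ext c
  rw [LinearMap.comp_apply, LinearMap.mulRight_apply, Bialgebra.comul_mul, ← 𝓡.eq,
    Finset.mul_sum, LinearMap.sum_apply]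
  refine Finset.sum_congr rfl fun i _ => ?_
  rw [LinearMap.comp_apply, ← LinearMap.mulRight_tmul]
  rfl

namespace HopfAlgebra

open LinearMap (mulRight)

section

variable (K) {A : Type*} [CommSemiring K] [Semiring A] [HopfAlgebra K A]

lemma mulRight_convMul_antipode_convMul_mulRight (u v : A) :
    toConv (mulRight K u) * toConv (antipode K) * toConv (mulRight K v) =
      toConv (mulRight K (u * v)) := by
  calc _ = toConv (mulRight K u) * toConv (mulRight K v ∘ₗ
          (toConv (antipode K) * toConv LinearMap.id : WithConv (A →ₗ[K] A)).ofConv) := by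
        rw [mul_assoc, LinearMap.mulRight_comp_convMul]; rfl
    _ = toConv (mulRight K v ∘ₗ (toConv (mulRight K u) * 1 : WithConv (A →ₗ[K] A)).ofConv) := by
        rw [LinearMap.antipode_mul_id, LinearMap.mulRight_comp_convMul]
    _ = toConv (mulRight K (u * v)) := by rw [mul_one, LinearMap.mulRight_mul]

/-- `ad K u` is `c ↦ c₁ u S(c₂)`, the adjoint action on `u` as a function of the acting
element `c`. -/
noncomputable def ad : A →ₐ[K] WithConv (A →ₗ[K] A) :=
  AlgHom.ofLinearMap
    (LinearMap.mulRight K (toConv (antipode K)) ∘ₗ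
      (WithConv.linearEquiv K (A →ₗ[K] A)).symm.toLinearMap ∘ₗ (LinearMap.mul K A).flip)
    (show toConv (mulRight K (1 : A)) * toConv (antipode K) = 1 by
      rw [LinearMap.mulRight_one, LinearMap.id_mul_antipode])
    (fun u v => show toConv (mulRight K (u * v)) * toConv (antipode K) =
        toConv (mulRight K u) * _ * (toConv (mulRight K v) * _) by
      rw [← mul_assoc, mulRight_convMul_antipode_convMul_mulRight])

variable {K}

lemma ad_apply (u : A) : ad K u = toConv (mulRight K u) * toConv (antipode K) := rfl

lemma adAct_tmul (c u : A) : adAct K A (c ⊗ₜ u) = ad K u c := by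
  rw [ad_apply, (ℛ K c).convMul_apply]
  simp [adAct, ← (ℛ K c).eq, TensorProduct.sum_tmul, mul_assoc]

lemma hopfComm_eq : hopfComm K A =
    LinearMap.mul' K A ∘ₗ LinearMap.mul' K (A ⊗[K] A) ∘ₗ
      map (map .id (antipode K) ∘ₗ comul) (map .id (antipode K) ∘ₗ comul) := by
  apply TensorProduct.ext'
  intro x y
  simp [hopfComm, ← (ℛ K x).eq, ← (ℛ K y).eq, TensorProduct.sum_tmul, TensorProduct.tmul_sum,
    mul_assoc]

end

variable {K A : Type*} [CommSemiring K] [Semiring A] [HopfAlgebra K A] [Coalgebra.IsCocomm K A]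

lemma antipode_convMul_antipode_comp_antipode :
    toConv (antipode K (A := A)) * toConv (antipode K ∘ₗ antipode K) = 1 := by
  ext c
  rw [(ℛ K c).convMul_apply_swap]
  simp [← antipode_mul_antidistrib, ← map_sum, sum_antipode_mul_eq_algebraMap_counit,
    Algebra.algebraMap_eq_smul_one]

lemma antipode_comp_antipode : antipode K ∘ₗ antipode K = (LinearMap.id : A →ₗ[K] A) :=
  congr(ofConv $(left_inv_eq_right_inv LinearMap.id_mul_antipode
    antipode_convMul_antipode_comp_antipode)).symm

@[simp]
lemma antipode_antipode (a : A) : antipode K (antipode K a) = a :=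
  congr($antipode_comp_antipode a)

lemma comul_comp_antipode :
    comul ∘ₗ antipode K = map (antipode K) (antipode K) ∘ₗ (comul : A →ₗ[K] A ⊗[K] A) := by
  have h := LinearMap.map_comp_comul_convMul_map_comp_comul (toConv (antipode K)) (toConv .id)
    (toConv (antipode K)) (toConv (.id : A →ₗ[K] A))
  rw [LinearMap.antipode_mul_id, LinearMap.map_convOne_convOne_comp_comul] at h
  simp only [map_id, LinearMap.id_comp] at h
  exact congr(ofConv $(left_inv_eq_right_inv h LinearMap.comul_right_inv)).symm

lemma antipode_comp_ad (u : A) :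
    toConv (antipode K ∘ₗ (ad K u).ofConv) = ad K (antipode K u) := by
  ext c
  rw [ad_apply, ad_apply, (ℛ K c).convMul_apply_swap]
  simp [(ℛ K c).convMul_apply, antipode_mul_antidistrib, mul_assoc]

lemma comul_comp_ad {ι : Type*} {u : A} (𝓡 : Coalgebra.Repr K u ι) :
    toConv (comul ∘ₗ (ad K u).ofConv) =
      ∑ i ∈ 𝓡.index, toConv (map (ad K (𝓡.left i)).ofConv (ad K (𝓡.right i)).ofConv ∘ₗ comul) := by
  calc toConv (comul ∘ₗ (ad K u).ofConv)
      = toConv (comul ∘ₗ mulRight K u) * toConv (comul ∘ₗ antipode K) := by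
        rw [ad_apply]
        exact congrArg toConv (LinearMap.algHom_comp_convMul_distrib (Bialgebra.comulAlgHom K A)
          (toConv (mulRight K u)) (toConv (antipode K)))
    _ = ∑ i ∈ 𝓡.index, toConv (map (mulRight K (𝓡.left i)) (mulRight K (𝓡.right i)) ∘ₗ comul) *
          toConv (map (antipode K) (antipode K) ∘ₗ comul) := by
        rw [Bialgebra.comul_comp_mulRight 𝓡, comul_comp_antipode, toConv_sum, Finset.sum_mul]
    _ = _ := by
        refine Finset.sum_congr rfl fun i _ => ?_
        have h := LinearMap.map_comp_comul_convMul_map_comp_comul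
          (toConv (mulRight K (𝓡.left i))) (toConv (antipode K))
          (toConv (mulRight K (𝓡.right i))) (toConv (antipode K))
        simpa only [ofConv_toConv, ad_apply] using h

lemma map_id_antipode_comp_comul_comp_ad {ι : Type*} {u : A} (𝓡 : Coalgebra.Repr K u ι) :
    toConv (map .id (antipode K) ∘ₗ comul ∘ₗ (ad K u).ofConv) =
      ∑ i ∈ 𝓡.index, toConv (map (ad K (𝓡.left i)).ofConv
        (ad K (antipode K (𝓡.right i))).ofConv ∘ₗ comul) := by
  ext c
  have h := congr(map .id (antipode K) ($(comul_comp_ad 𝓡) c))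
  simp only [ofConv_sum, LinearMap.sum_apply, map_sum, LinearMap.comp_apply] at h ⊢
  rw [h]
  refine Finset.sum_congr rfl fun i _ => ?_
  rw [← toConv_ofConv (ad K (antipode K _)), ← antipode_comp_ad,
    ← LinearMap.comp_apply (map _ _), ← map_comp]
  rfl

lemma ad_hopfComm (x y : A) :
    ad K (hopfComm K A (x ⊗ₜ y)) =
      toConv (hopfComm K A ∘ₗ map (ad K x).ofConv (ad K y).ofConv ∘ₗ comul) := by
  set P : A →ₗ[K] A ⊗[K] A := map .id (antipode K) ∘ₗ comul
  rw [hopfComm_eq]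
  calc ad K (LinearMap.mul' K A (LinearMap.mul' K (A ⊗[K] A) (map P P (x ⊗ₜ y))))
      = ∑ k ∈ (ℛ K x).index, ∑ l ∈ (ℛ K y).index,
          ad K ((ℛ K x).left k) * ad K ((ℛ K y).left l) *
            (ad K (antipode K ((ℛ K x).right k)) * ad K (antipode K ((ℛ K y).right l))) := by
        simp [P, ← (ℛ K x).eq, ← (ℛ K y).eq, TensorProduct.sum_tmul, TensorProduct.tmul_sum,
          Finset.sum_comm (s := (ℛ K x).index)]
    _ = ∑ k ∈ (ℛ K x).index, ∑ l ∈ (ℛ K y).index, toConv (LinearMap.mul' K A ∘ₗ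
          (toConv (map (ad K ((ℛ K x).left k)).ofConv
              (ad K (antipode K ((ℛ K x).right k))).ofConv ∘ₗ comul) *
            toConv (map (ad K ((ℛ K y).left l)).ofConv
              (ad K (antipode K ((ℛ K y).right l))).ofConv ∘ₗ comul)).ofConv) := by
        simp only [LinearMap.map_comp_comul_convMul_map_comp_comul]
        rfl
    _ = toConv (LinearMap.mul' K A ∘ₗ
          (toConv (P ∘ₗ (ad K x).ofConv) * toConv (P ∘ₗ (ad K y).ofConv)).ofConv) := by
        rw [LinearMap.comp_assoc, map_id_antipode_comp_comul_comp_ad (ℛ K x),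
          LinearMap.comp_assoc, map_id_antipode_comp_comul_comp_ad (ℛ K y), Finset.sum_mul_sum]
        ext c
        simp [map_sum]
    _ = _ := by
        simp [P, LinearMap.convMul_def, LinearMap.comp_assoc, map_comp]

lemma adAct_hopfComm {ι : Type*} {c : A} (𝓡 : Coalgebra.Repr K c ι) (x y : A) :
    adAct K A (c ⊗ₜ hopfComm K A (x ⊗ₜ y)) =
      ∑ i ∈ 𝓡.index, hopfComm K A (adAct K A (𝓡.left i ⊗ₜ x) ⊗ₜ adAct K A (𝓡.right i ⊗ₜ y)) := by
  rw [adAct_tmul, ad_hopfComm]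
  simp [← 𝓡.eq, adAct_tmul]

end HopfAlgebra

theorem hopfCommutator_normal_general
    {K A : Type*} [Field K] [Ring A] [HopfAlgebra K A] (hA : _root_.IsCocomm K A)
    (X Y : Subalgebra K A)
    (hX_normal : ∀ (a : A), ∀ x ∈ X, adAct K A (a ⊗ₜ[K] x) ∈ X)
    (hY_normal : ∀ (a : A), ∀ y ∈ Y, adAct K A (a ⊗ₜ[K] y) ∈ Y) :
    ∀ (c : A), ∀ x ∈ X, ∀ y ∈ Y,
      adAct K A (c ⊗ₜ[K] hopfComm K A (x ⊗ₜ[K] y)) ∈ hopfCommutator X Y := by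
  have : Coalgebra.IsCocomm K A := ⟨hA⟩
  intro c x hx y hy
  rw [HopfAlgebra.adAct_hopfComm (ℛ K c)]
  exact Subalgebra.sum_mem _ fun i _ =>
    Algebra.subset_adjoin ⟨_, hX_normal _ x hx, _, hY_normal _ y hy, rfl⟩

/-- The commutator subalgebra `[X,Y]` of two normal Hopf subalgebras is itself
normal: `c₁ {x,y} S(c₂) ∈ [X,Y]` for every `c ∈ A`, `x ∈ X`, `y ∈ Y`. -/
theorem hopfCommutator_normal
    {K A : Type*} [Field K] [Ring A] [HopfAlgebra K A] (hA : _root_.IsCocomm K A)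
    (X Y : Subalgebra K A)
    (hX_comul : ∀ x ∈ X, Coalgebra.comul (R := K) x ∈
      LinearMap.range (TensorProduct.map X.toSubmodule.subtype X.toSubmodule.subtype))
    (hX_antipode : ∀ x ∈ X, HopfAlgebra.antipode (R := K) x ∈ X)
    (hX_normal : ∀ (a : A), ∀ x ∈ X, adAct K A (a ⊗ₜ[K] x) ∈ X)
    (hY_comul : ∀ y ∈ Y, Coalgebra.comul (R := K) y ∈
      LinearMap.range (TensorProduct.map Y.toSubmodule.subtype Y.toSubmodule.subtype))
    (hY_antipode : ∀ y ∈ Y, HopfAlgebra.antipode (R := K) y ∈ Y)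
    (hY_normal : ∀ (a : A), ∀ y ∈ Y, adAct K A (a ⊗ₜ[K] y) ∈ Y) :
    ∀ (c : A), ∀ x ∈ X, ∀ y ∈ Y,
      adAct K A (c ⊗ₜ[K] hopfComm K A (x ⊗ₜ[K] y)) ∈ hopfCommutator X Y :=
  hopfCommutator_normal_general hA X Y hX_normal hY_normal
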